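/- Let G be a graph with minimum degree at least 2. In any residual graph R of the total domination game on G in which every legal move has value at most 4, R contains no white leaf and no green leaf; consequently every component of R is either a P4 with blue leaves and white internal vertices, or a P3 with blue leaves and green center. -/

import Mathlib

open SimpleGraph Finset

inductive GameColor | white | green | blue | red
deriving DecidableEq

def GameColor.weight : GameColor → ℕ
  | white => 3
  | green => 2
  | blue => 1
  | red => 0

variable {V : Type} [Fintype V] [DecidableEq V]

/-- The set of vertices totally dominated by the played set `D`. -/
def totDom (G : SimpleGraph V) [DecidableRel G.Adj] (D : Finset V) : Finset V :=
  Finset.univ.filter fun u => ∃ v ∈ D, G.Adj u v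

/-- A vertex `v` is a legal move if playing it totally dominates a new vertex. -/
def isLegal (G : SimpleGraph V) [DecidableRel G.Adj] (D : Finset V) (v : V) : Prop :=
  ∃ u, G.Adj v u ∧ u ∉ totDom G D

instance (G : SimpleGraph V) [DecidableRel G.Adj] (D : Finset V) :
    DecidablePred (isLegal G D) := fun v =>
  decidable_of_iff (∃ u, G.Adj v u ∧ u ∉ totDom G D) Iff.rfl

/-- The color of a vertex in the partially total dominated graph with played set `D`. -/
def colorOf (G : SimpleGraph V) [DecidableRel G.Adj] (D : Finset V) (v : V) : GameColor :=
  if v ∈ totDom G D then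
    (if isLegal G D v then .blue else .red)
  else (if v ∈ D then .green else .white)

/-- The total weight of the colored graph. -/
def totalWeight (G : SimpleGraph V) [DecidableRel G.Adj] (D : Finset V) : ℕ :=
  ∑ v, (colorOf G D v).weight

/-- The residualGraph graph: delete red vertices and blue–blue edges. -/
def residualGraph (G : SimpleGraph V) [DecidableRel G.Adj] (D : Finset V) : SimpleGraph V where
  Adj u w := G.Adj u w ∧ colorOf G D u ≠ .red ∧ colorOf G D w ≠ .red ∧
      ¬(colorOf G D u = .blue ∧ colorOf G D w = .blue)
  symm := ⟨fun u w ⟨h, a, b, c⟩ => ⟨h.symm, b, a, fun ⟨x, y⟩ => c ⟨y, x⟩⟩⟩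
  loopless := ⟨fun u ⟨h, _⟩ => G.loopless.irrefl u h⟩

instance (G : SimpleGraph V) [DecidableRel G.Adj] (D : Finset V) :
    DecidableRel (residualGraph G D).Adj := fun u w =>
  decidable_of_iff (G.Adj u w ∧ colorOf G D u ≠ .red ∧ colorOf G D w ≠ .red ∧
      ¬(colorOf G D u = .blue ∧ colorOf G D w = .blue)) Iff.rfl

def legalMoves (G : SimpleGraph V) [DecidableRel G.Adj] (D : Finset V) : Finset V :=
  Finset.univ.filter (isLegal G D)

/-- The value of the total domination game from position `D` with `fuel` moves allowed,
where `isDom = true` when it is Dominator's turn (Dominator minimizes, Staller maximizes).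
Since each legal move totally dominates a new vertex, fuel `Fintype.card V` always suffices. -/
def gameVal (G : SimpleGraph V) [DecidableRel G.Adj] : Bool → ℕ → Finset V → ℕ
  | _, 0, _ => 0
  | isDom, n + 1, D =>
    if h : (legalMoves G D).Nonempty then
      if isDom then 1 + (legalMoves G D).inf' h fun v => gameVal G false n (insert v D)
      else 1 + (legalMoves G D).sup' h fun v => gameVal G true n (insert v D)
    else 0

/-- The game total domination number `γ_tg(G)`: Dominator starts, both play optimally. -/
def gtd (G : SimpleGraph V) [DecidableRel G.Adj] : ℕ :=
  gameVal G true (Fintype.card V) ∅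

/-!
Playing a vertex never raises the weight of any vertex, so in Phase 2 no legal move lowers the
weight of any set of vertices by 5 or more. Each of the following configurations has a move that
loses 5: a blue vertex with two undominated neighbours, a white vertex with two white neighbours
or with none, two blue neighbours of a white vertex that is adjacent to another white vertex, a
green vertex with three neighbours. With minimum degree 2 this leaves a white vertex exactly one
white and one blue neighbour, and a green vertex exactly two blue ones. Undominated vertices keep
all their edges in the residual graph, while a blue vertex keeps only the edge to its unique
undominated neighbour; this gives the `P4` and `P3` components, and white and green vertices keep
their degree `≥ 2`.
-/

namespace GameColor

@[simp] lemma weight_white : white.weight = 3 := rfl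
@[simp] lemma weight_green : green.weight = 2 := rfl
@[simp] lemma weight_blue : blue.weight = 1 := rfl
@[simp] lemma weight_red : red.weight = 0 := rfl

end GameColor

def IsPhase2 (G : SimpleGraph V) [DecidableRel G.Adj] (D : Finset V) : Prop :=
  ∀ v, isLegal G D v → totalWeight G D ≤ totalWeight G (insert v D) + 4

def IsP4Component (G : SimpleGraph V) [DecidableRel G.Adj] (D : Finset V) (b₁ w₁ w₂ b₂ : V) :
    Prop :=
  colorOf G D b₁ = .blue ∧ colorOf G D w₁ = .white ∧
    colorOf G D w₂ = .white ∧ colorOf G D b₂ = .blue ∧ b₁ ≠ b₂ ∧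
    (residualGraph G D).neighborFinset b₁ = {w₁} ∧
    (residualGraph G D).neighborFinset w₁ = {b₁, w₂} ∧
    (residualGraph G D).neighborFinset w₂ = {w₁, b₂} ∧
    (residualGraph G D).neighborFinset b₂ = {w₂}

def IsP3Component (G : SimpleGraph V) [DecidableRel G.Adj] (D : Finset V) (b₁ g b₂ : V) :
    Prop :=
  colorOf G D b₁ = .blue ∧ colorOf G D g = .green ∧
    colorOf G D b₂ = .blue ∧ b₁ ≠ b₂ ∧
    (residualGraph G D).neighborFinset b₁ = {g} ∧
    (residualGraph G D).neighborFinset g = {b₁, b₂} ∧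
    (residualGraph G D).neighborFinset b₂ = {g}

section

variable {G : SimpleGraph V} [DecidableRel G.Adj] {D : Finset V}

omit [DecidableEq V] in
lemma exists_adj_ne_of_two_le_degree {v : V} (hv : 2 ≤ G.degree v) :
    ∃ a b, G.Adj v a ∧ G.Adj v b ∧ a ≠ b := by
  rw [← card_neighborFinset_eq_degree] at hv
  obtain ⟨a, ha, b, hb, hab⟩ := one_lt_card.1 hv
  exact ⟨a, b, (mem_neighborFinset _ _ _).1 ha, (mem_neighborFinset _ _ _).1 hb, hab⟩

lemma neighborFinset_eq_pair {v a b : V} (ha : G.Adj v a) (hb : G.Adj v b)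
    (h : ∀ t, G.Adj v t → t = a ∨ t = b) : G.neighborFinset v = {a, b} := by
  ext t
  simp only [mem_neighborFinset, mem_insert, mem_singleton]
  exact ⟨h t, by rintro (rfl | rfl) <;> assumption⟩

omit [DecidableEq V] in
lemma mem_totDom {u : V} : u ∈ totDom G D ↔ ∃ v ∈ D, G.Adj u v := by
  simp [totDom]

lemma mem_totDom_insert {v u : V} :
    u ∈ totDom G (insert v D) ↔ u ∈ totDom G D ∨ G.Adj u v := by
  simp [totDom, or_comm]

lemma colorOf_eq_white {v : V} : colorOf G D v = .white ↔ v ∉ totDom G D ∧ v ∉ D := by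
  unfold colorOf; split_ifs <;> simp_all

lemma colorOf_eq_green {v : V} : colorOf G D v = .green ↔ v ∉ totDom G D ∧ v ∈ D := by
  unfold colorOf; split_ifs <;> simp_all

lemma colorOf_eq_blue {v : V} : colorOf G D v = .blue ↔ v ∈ totDom G D ∧ isLegal G D v := by
  unfold colorOf; split_ifs <;> simp_all

lemma colorOf_eq_red {v : V} : colorOf G D v = .red ↔ v ∈ totDom G D ∧ ¬isLegal G D v := by
  unfold colorOf; split_ifs <;> simp_all

lemma colorOf_eq_blue_of_adj {t v : V} (ht : t ∈ totDom G D) (htv : G.Adj t v)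
    (hv : v ∉ totDom G D) : colorOf G D t = .blue :=
  colorOf_eq_blue.2 ⟨ht, v, htv, hv⟩

lemma colorOf_eq_blue_of_adj_green {t g : V} (htg : G.Adj t g) (hg : colorOf G D g = .green) :
    colorOf G D t = .blue := by
  obtain ⟨hgdom, hgD⟩ := colorOf_eq_green.1 hg
  exact colorOf_eq_blue_of_adj (mem_totDom.2 ⟨g, hgD, htg⟩) htg hgdom

lemma colorOf_of_adj_white {w t : V} (hw : colorOf G D w = .white) (hwt : G.Adj w t) :
    colorOf G D t = .white ∨ colorOf G D t = .blue := by
  obtain ⟨hwdom, -⟩ := colorOf_eq_white.1 hw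
  by_cases htdom : t ∈ totDom G D
  · exact Or.inr (colorOf_eq_blue_of_adj htdom hwt.symm hwdom)
  · have htD : t ∉ D := fun htD => hwdom (mem_totDom.2 ⟨t, htD, hwt⟩)
    exact Or.inl (colorOf_eq_white.2 ⟨htdom, htD⟩)

lemma weight_colorOf_insert_le (v x : V) :
    (colorOf G (insert v D) x).weight ≤ (colorOf G D x).weight := by
  have hdom : x ∈ totDom G D → x ∈ totDom G (insert v D) := by
    rw [mem_totDom_insert]; tauto
  have hlegal : isLegal G (insert v D) x → isLegal G D x := by
    rintro ⟨u, hxu, hu⟩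
    exact ⟨u, hxu, fun h => hu (mem_totDom_insert.2 (Or.inl h))⟩
  unfold colorOf
  split_ifs <;> simp_all

lemma colorOf_insert_eq_red {v u : V} (hu : u ∈ totDom G (insert v D))
    (h : ∀ t, G.Adj u t → t ∈ totDom G D ∨ G.Adj t v) : colorOf G (insert v D) u = .red := by
  refine colorOf_eq_red.2 ⟨hu, ?_⟩
  rintro ⟨t, hut, ht⟩
  exact ht (mem_totDom_insert.2 (h t hut))

lemma colorOf_insert_self_of_blue {v : V} (hv : colorOf G D v = .blue) :
    colorOf G (insert v D) v = .red :=
  colorOf_insert_eq_red (mem_totDom_insert.2 (Or.inl (colorOf_eq_blue.1 hv).1))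
    fun _ hvt => Or.inr hvt.symm

lemma colorOf_insert_self_of_white {v : V} (hv : colorOf G D v = .white) :
    colorOf G (insert v D) v = .green := by
  obtain ⟨hvdom, -⟩ := colorOf_eq_white.1 hv
  refine colorOf_eq_green.2 ⟨?_, mem_insert_self v D⟩
  rw [mem_totDom_insert]
  exact fun h => h.elim hvdom G.irrefl

lemma weight_colorOf_insert_add_two_le {v u : V} (hvu : G.Adj v u) (hu : u ∉ totDom G D) :
    (colorOf G (insert v D) u).weight + 2 ≤ (colorOf G D u).weight := by
  have hudom : u ∈ totDom G (insert v D) := mem_totDom_insert.2 (Or.inr hvu.symm)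
  by_cases huD : u ∈ D
  · rw [colorOf_eq_green.2 ⟨hu, huD⟩,
      colorOf_insert_eq_red hudom fun t hut => Or.inl (mem_totDom.2 ⟨u, huD, hut.symm⟩)]
    simp
  · have : (colorOf G (insert v D) u).weight ≤ 1 := by
      unfold colorOf
      rw [if_pos hudom]
      split_ifs <;> simp
    rw [colorOf_eq_white.2 ⟨hu, huD⟩, GameColor.weight_white]
    omega

lemma neighborFinset_residualGraph_of_notMem_totDom {v : V} (hv : v ∉ totDom G D) :
    (residualGraph G D).neighborFinset v = G.neighborFinset v := by
  ext t
  simp only [mem_neighborFinset]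
  refine ⟨fun h => h.1, fun hvt => ⟨hvt, fun h => hv (colorOf_eq_red.1 h).1, ?_,
    fun h => hv (colorOf_eq_blue.1 h.1).1⟩⟩
  by_cases ht : t ∈ totDom G D
  · simp [colorOf_eq_blue_of_adj ht hvt.symm hv]
  · exact fun h => ht (colorOf_eq_red.1 h).1

lemma exists_notMem_totDom_mem_insert_neighborFinset {z : V} (hz : colorOf G D z ≠ .red) :
    ∃ u ∉ totDom G D, z ∈ insert u ((residualGraph G D).neighborFinset u) := by
  by_cases hzdom : z ∈ totDom G D
  · obtain ⟨u, hzu, hu⟩ : isLegal G D z := by_contra fun h => hz (colorOf_eq_red.2 ⟨hzdom, h⟩)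
    refine ⟨u, hu, mem_insert_of_mem ?_⟩
    rw [neighborFinset_residualGraph_of_notMem_totDom hu, mem_neighborFinset]
    exact hzu.symm
  · exact ⟨z, hzdom, mem_insert_self z _⟩

end

namespace IsPhase2

variable {G : SimpleGraph V} [DecidableRel G.Adj] {D : Finset V}

lemma sum_weight_le (h : IsPhase2 G D) {v : V} (hv : isLegal G D v) (S : Finset V) :
    ∑ x ∈ S, (colorOf G D x).weight ≤ ∑ x ∈ S, (colorOf G (insert v D) x).weight + 4 := by
  have hrest : ∑ x ∈ univ \ S, (colorOf G (insert v D) x).weight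
      ≤ ∑ x ∈ univ \ S, (colorOf G D x).weight :=
    sum_le_sum fun x _ => weight_colorOf_insert_le v x
  have hbefore := sum_sdiff (subset_univ S) (f := fun x => (colorOf G D x).weight)
  have hafter := sum_sdiff (subset_univ S) (f := fun x => (colorOf G (insert v D) x).weight)
  have := h v hv
  unfold totalWeight at this
  omega

lemma weight_triple_le (h : IsPhase2 G D) {v a b c : V} (hv : isLegal G D v)
    (hab : a ≠ b) (hac : a ≠ c) (hbc : b ≠ c) :
    (colorOf G D a).weight + (colorOf G D b).weight + (colorOf G D c).weight
      ≤ (colorOf G (insert v D) a).weight + (colorOf G (insert v D) b).weight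
        + (colorOf G (insert v D) c).weight + 4 := by
  simpa [sum_insert, hab, hac, hbc, add_assoc] using h.sum_weight_le hv {a, b, c}

lemma weight_quadruple_le (h : IsPhase2 G D) {v a b c d : V} (hv : isLegal G D v)
    (hab : a ≠ b) (hac : a ≠ c) (had : a ≠ d) (hbc : b ≠ c) (hbd : b ≠ d) (hcd : c ≠ d) :
    (colorOf G D a).weight + (colorOf G D b).weight + (colorOf G D c).weight
        + (colorOf G D d).weight
      ≤ (colorOf G (insert v D) a).weight + (colorOf G (insert v D) b).weight
        + (colorOf G (insert v D) c).weight + (colorOf G (insert v D) d).weight + 4 := by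
  simpa [sum_insert, hab, hac, had, hbc, hbd, hcd, add_assoc] using
    h.sum_weight_le hv {a, b, c, d}

lemma eq_of_blue_of_adj (h : IsPhase2 G D) {x u₁ u₂ : V} (hx : colorOf G D x = .blue)
    (hxu₁ : G.Adj x u₁) (hu₁ : u₁ ∉ totDom G D) (hxu₂ : G.Adj x u₂) (hu₂ : u₂ ∉ totDom G D) :
    u₁ = u₂ := by
  by_contra hne
  obtain ⟨hxdom, hxlegal⟩ := colorOf_eq_blue.1 hx
  have hdrop := h.weight_triple_le hxlegal (ne_of_mem_of_not_mem hxdom hu₁)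
    (ne_of_mem_of_not_mem hxdom hu₂) hne
  have hdrop₁ := weight_colorOf_insert_add_two_le hxu₁ hu₁
  have hdrop₂ := weight_colorOf_insert_add_two_le hxu₂ hu₂
  rw [colorOf_insert_self_of_blue hx, hx, GameColor.weight_red, GameColor.weight_blue] at hdrop
  omega

lemma eq_of_white_of_adj_white (h : IsPhase2 G D) {w w₁ w₂ : V} (hw : colorOf G D w = .white)
    (hw₁ : colorOf G D w₁ = .white) (hw₂ : colorOf G D w₂ = .white)
    (hww₁ : G.Adj w w₁) (hww₂ : G.Adj w w₂) : w₁ = w₂ := by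
  by_contra hne
  have hu₁ := (colorOf_eq_white.1 hw₁).1
  have hdrop := h.weight_triple_le ⟨w₁, hww₁, hu₁⟩ hww₁.ne hww₂.ne hne
  have hdrop₁ := weight_colorOf_insert_add_two_le hww₁ hu₁
  have hdrop₂ := weight_colorOf_insert_add_two_le hww₂ (colorOf_eq_white.1 hw₂).1
  rw [colorOf_insert_self_of_white hw, hw, GameColor.weight_green, GameColor.weight_white] at hdrop
  omega

lemma colorOf_insert_eq_red_of_blue (h : IsPhase2 G D) {v y u : V}
    (hy : colorOf G D y = .blue) (hyu : G.Adj y u) (hu : u ∉ totDom G D) (huv : G.Adj u v) :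
    colorOf G (insert v D) y = .red := by
  refine colorOf_insert_eq_red (mem_totDom_insert.2 (Or.inl (colorOf_eq_blue.1 hy).1))
    fun t hyt => ?_
  by_cases ht : t ∈ totDom G D
  · exact Or.inl ht
  · exact Or.inr (h.eq_of_blue_of_adj hy hyt ht hyu hu ▸ huv)

lemma exists_adj_white_of_white (hmin : ∀ v, 2 ≤ G.degree v) (h : IsPhase2 G D) {w : V}
    (hw : colorOf G D w = .white) : ∃ w', G.Adj w w' ∧ colorOf G D w' = .white := by
  by_contra! hno
  have hblue t (hwt : G.Adj w t) : colorOf G D t = .blue :=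
    (colorOf_of_adj_white hw hwt).resolve_left (hno t hwt)
  obtain ⟨b₁, b₂, hwb₁, hwb₂, hne⟩ := exists_adj_ne_of_two_le_degree (hmin w)
  have hwdom := (colorOf_eq_white.1 hw).1
  -- playing `b₁` turns `b₁`, `w` and `b₂` red
  have hdrop := h.weight_triple_le (a := b₁) (b := w) (c := b₂)
    (colorOf_eq_blue.1 (hblue b₁ hwb₁)).2
    (ne_of_apply_ne (colorOf G D) (by simp [hblue b₁ hwb₁, hw])) hne
    (ne_of_apply_ne (colorOf G D) (by simp [hblue b₂ hwb₂, hw]))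
  rw [colorOf_insert_self_of_blue (hblue b₁ hwb₁),
    colorOf_insert_eq_red (mem_totDom_insert.2 (Or.inr hwb₁))
      fun t hwt => Or.inl (colorOf_eq_blue.1 (hblue t hwt)).1,
    h.colorOf_insert_eq_red_of_blue (hblue b₂ hwb₂) hwb₂.symm hwdom hwb₁,
    hblue b₁ hwb₁, hblue b₂ hwb₂, hw] at hdrop
  simp at hdrop

lemma eq_of_blue_of_adj_of_adj_white (h : IsPhase2 G D) {w w' y₁ y₂ : V}
    (hw : colorOf G D w = .white) (hw' : colorOf G D w' = .white) (hww' : G.Adj w w')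
    (hy₁ : colorOf G D y₁ = .blue) (hy₂ : colorOf G D y₂ = .blue)
    (hw'y₁ : G.Adj w' y₁) (hw'y₂ : G.Adj w' y₂) : y₁ = y₂ := by
  by_contra hne
  have hw'dom := (colorOf_eq_white.1 hw').1
  -- playing `w` turns `w` green, dominates `w'` and turns `y₁` and `y₂` red
  have hdrop := h.weight_quadruple_le (a := w) (b := w') (c := y₁) (d := y₂)
    ⟨w', hww', hw'dom⟩ hww'.ne
    (ne_of_apply_ne (colorOf G D) (by simp [hw, hy₁]))
    (ne_of_apply_ne (colorOf G D) (by simp [hw, hy₂]))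
    (ne_of_apply_ne (colorOf G D) (by simp [hw', hy₁]))
    (ne_of_apply_ne (colorOf G D) (by simp [hw', hy₂])) hne
  have hdrop' := weight_colorOf_insert_add_two_le hww' hw'dom
  rw [colorOf_insert_self_of_white hw,
    h.colorOf_insert_eq_red_of_blue hy₁ hw'y₁.symm hw'dom hww'.symm,
    h.colorOf_insert_eq_red_of_blue hy₂ hw'y₂.symm hw'dom hww'.symm, hw, hy₁, hy₂] at hdrop
  simp only [GameColor.weight_white, GameColor.weight_green, GameColor.weight_blue,
    GameColor.weight_red] at hdrop
  omega

lemma exists_neighborFinset_eq_of_green (hmin : ∀ v, 2 ≤ G.degree v) (h : IsPhase2 G D) {g : V}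
    (hg : colorOf G D g = .green) :
    ∃ b₁ b₂, colorOf G D b₁ = .blue ∧ colorOf G D b₂ = .blue ∧ b₁ ≠ b₂ ∧
      G.neighborFinset g = {b₁, b₂} := by
  obtain ⟨hgdom, hgD⟩ := colorOf_eq_green.1 hg
  have hblue t (hgt : G.Adj g t) : colorOf G D t = .blue := colorOf_eq_blue_of_adj_green hgt.symm hg
  obtain ⟨b₁, b₂, hgb₁, hgb₂, hne⟩ := exists_adj_ne_of_two_le_degree (hmin g)
  refine ⟨b₁, b₂, hblue b₁ hgb₁, hblue b₂ hgb₂, hne, neighborFinset_eq_pair hgb₁ hgb₂ ?_⟩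
  intro t hgt
  by_contra! ht
  -- playing `b₁` turns `b₁`, `g`, `b₂` and `t` red
  have hdrop := h.weight_quadruple_le (a := b₁) (b := g) (c := b₂) (d := t)
    (colorOf_eq_blue.1 (hblue b₁ hgb₁)).2
    (ne_of_apply_ne (colorOf G D) (by simp [hblue b₁ hgb₁, hg])) hne ht.1.symm
    (ne_of_apply_ne (colorOf G D) (by simp [hblue b₂ hgb₂, hg]))
    (ne_of_apply_ne (colorOf G D) (by simp [hblue t hgt, hg])) (Ne.symm ht.2)
  rw [colorOf_insert_self_of_blue (hblue b₁ hgb₁),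
    colorOf_insert_eq_red (mem_totDom_insert.2 (Or.inr hgb₁))
      fun s hgs => Or.inl (mem_totDom.2 ⟨g, hgD, hgs.symm⟩),
    h.colorOf_insert_eq_red_of_blue (hblue b₂ hgb₂) hgb₂.symm hgdom hgb₁,
    h.colorOf_insert_eq_red_of_blue (hblue t hgt) hgt.symm hgdom hgb₁,
    hblue b₁ hgb₁, hblue b₂ hgb₂, hblue t hgt, hg] at hdrop
  simp at hdrop

lemma exists_neighborFinset_eq_of_white (hmin : ∀ v, 2 ≤ G.degree v) (h : IsPhase2 G D) {w : V}
    (hw : colorOf G D w = .white) :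
    ∃ w' b, colorOf G D w' = .white ∧ colorOf G D b = .blue ∧ G.neighborFinset w = {w', b} := by
  obtain ⟨w', hww', hw'⟩ := h.exists_adj_white_of_white hmin hw
  obtain ⟨b, hwb, hb⟩ : ∃ b, G.Adj w b ∧ colorOf G D b = .blue := by
    obtain ⟨t₁, t₂, hwt₁, hwt₂, hne⟩ := exists_adj_ne_of_two_le_degree (hmin w)
    rcases colorOf_of_adj_white hw hwt₁ with ht₁ | ht₁
    · rcases colorOf_of_adj_white hw hwt₂ with ht₂ | ht₂
      · exact absurd (h.eq_of_white_of_adj_white hw ht₁ ht₂ hwt₁ hwt₂) hne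
      · exact ⟨t₂, hwt₂, ht₂⟩
    · exact ⟨t₁, hwt₁, ht₁⟩
  refine ⟨w', b, hw', hb, neighborFinset_eq_pair hww' hwb fun t hwt => ?_⟩
  rcases colorOf_of_adj_white hw hwt with ht | ht
  · exact Or.inl (h.eq_of_white_of_adj_white hw ht hw' hwt hww')
  · exact Or.inr (h.eq_of_blue_of_adj_of_adj_white hw' hw hww'.symm ht hb hwt hwb)

lemma neighborFinset_residualGraph_of_blue (h : IsPhase2 G D) {x u : V}
    (hx : colorOf G D x = .blue) (hxu : G.Adj x u) (hu : u ∉ totDom G D) :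
    (residualGraph G D).neighborFinset x = {u} := by
  ext t
  simp only [mem_neighborFinset, mem_singleton]
  constructor
  · rintro ⟨hxt, -, htred, hblue⟩
    by_contra htu
    have htdom : t ∈ totDom G D := by_contra fun ht => htu (h.eq_of_blue_of_adj hx hxt ht hxu hu)
    by_cases htlegal : isLegal G D t
    · exact hblue ⟨hx, colorOf_eq_blue.2 ⟨htdom, htlegal⟩⟩
    · exact htred (colorOf_eq_red.2 ⟨htdom, htlegal⟩)
  · rintro rfl
    exact ⟨hxu, by simp [hx], fun h => hu (colorOf_eq_red.1 h).1,
      fun h => hu (colorOf_eq_blue.1 h.2).1⟩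

lemma exists_isP4Component_of_white (hmin : ∀ v, 2 ≤ G.degree v) (h : IsPhase2 G D) {w : V}
    (hw : colorOf G D w = .white) : ∃ b₁ w₂ b₂, IsP4Component G D b₁ w w₂ b₂ := by
  obtain ⟨w₂, b₁, hw₂, hb₁, hN⟩ := h.exists_neighborFinset_eq_of_white hmin hw
  obtain ⟨w', b₂, hw', hb₂, hN₂⟩ := h.exists_neighborFinset_eq_of_white hmin hw₂
  have hwdom := (colorOf_eq_white.1 hw).1
  have hw₂dom := (colorOf_eq_white.1 hw₂).1
  have hww₂ : G.Adj w w₂ := by rw [← mem_neighborFinset, hN]; simp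
  have hwb₁ : G.Adj w b₁ := by rw [← mem_neighborFinset, hN]; simp
  have hw₂b₂ : G.Adj w₂ b₂ := by rw [← mem_neighborFinset, hN₂]; simp
  obtain rfl : w' = w := by
    have hw₂w : w ∈ G.neighborFinset w₂ := (mem_neighborFinset _ _ _).2 hww₂.symm
    rw [hN₂, mem_insert, mem_singleton] at hw₂w
    exact (hw₂w.resolve_right fun e => by simp [e, hb₂] at hw).symm
  refine ⟨b₁, w₂, b₂, hb₁, hw, hw₂, hb₂, fun e => ?_,
    h.neighborFinset_residualGraph_of_blue hb₁ hwb₁.symm hwdom,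
    by rw [neighborFinset_residualGraph_of_notMem_totDom hwdom, hN, pair_comm],
    by rw [neighborFinset_residualGraph_of_notMem_totDom hw₂dom, hN₂],
    h.neighborFinset_residualGraph_of_blue hb₂ hw₂b₂.symm hw₂dom⟩
  subst e
  exact hww₂.ne (h.eq_of_blue_of_adj hb₁ hwb₁.symm hwdom hw₂b₂.symm hw₂dom)

lemma exists_isP3Component_of_green (hmin : ∀ v, 2 ≤ G.degree v) (h : IsPhase2 G D) {g : V}
    (hg : colorOf G D g = .green) : ∃ b₁ b₂, IsP3Component G D b₁ g b₂ := by
  obtain ⟨b₁, b₂, hb₁, hb₂, hne, hN⟩ := h.exists_neighborFinset_eq_of_green hmin hg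
  have hgdom := (colorOf_eq_green.1 hg).1
  have hgb₁ : G.Adj g b₁ := by rw [← mem_neighborFinset, hN]; simp
  have hgb₂ : G.Adj g b₂ := by rw [← mem_neighborFinset, hN]; simp
  exact ⟨b₁, b₂, hb₁, hg, hb₂, hne,
    h.neighborFinset_residualGraph_of_blue hb₁ hgb₁.symm hgdom,
    by rw [neighborFinset_residualGraph_of_notMem_totDom hgdom, hN],
    h.neighborFinset_residualGraph_of_blue hb₂ hgb₂.symm hgdom⟩

lemma mem_component_of_notMem_totDom (hmin : ∀ v, 2 ≤ G.degree v) (h : IsPhase2 G D)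
    {u z : V} (hu : u ∉ totDom G D) (hz : z ∈ insert u ((residualGraph G D).neighborFinset u)) :
    (∃ b₁ w₁ w₂ b₂ : V, z ∈ ({b₁, w₁, w₂, b₂} : Finset V) ∧ IsP4Component G D b₁ w₁ w₂ b₂) ∨
      (∃ b₁ g b₂ : V, z ∈ ({b₁, g, b₂} : Finset V) ∧ IsP3Component G D b₁ g b₂) := by
  by_cases huD : u ∈ D
  · obtain ⟨b₁, b₂, hb₁, hg, hb₂, hne, hN₁, hN, hN₂⟩ :=
      h.exists_isP3Component_of_green hmin (colorOf_eq_green.2 ⟨hu, huD⟩)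
    rw [hN] at hz
    refine Or.inr ⟨b₁, u, b₂, ?_, hb₁, hg, hb₂, hne, hN₁, hN, hN₂⟩
    simp only [mem_insert, mem_singleton] at hz ⊢
    tauto
  · obtain ⟨b₁, w₂, b₂, hb₁, hw, hw₂, hb₂, hne, hN₁, hN, hN₂, hN₃⟩ :=
      h.exists_isP4Component_of_white hmin (colorOf_eq_white.2 ⟨hu, huD⟩)
    rw [hN] at hz
    refine Or.inl ⟨b₁, u, w₂, b₂, ?_, hb₁, hw, hw₂, hb₂, hne, hN₁, hN, hN₂, hN₃⟩
    simp only [mem_insert, mem_singleton] at hz ⊢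
    tauto

end IsPhase2

/-- If `G` has minimum degree at least 2 and the residual graph is in Phase 2
(every legal move has value at most 4), then the residual graph has no white leaf and no
green leaf, and every component is a `P4` blue–white–white–blue or a `P3` blue–green–blue. -/
theorem stmt12 (G : SimpleGraph V) [DecidableRel G.Adj] (D : Finset V)
    (hmin : ∀ v, 2 ≤ G.degree v)
    (hphase2 : ∀ v, isLegal G D v → totalWeight G D ≤ totalWeight G (insert v D) + 4) :
    (∀ v, (colorOf G D v = .white ∨ colorOf G D v = .green) →
      (residualGraph G D).degree v ≠ 1) ∧
    (∀ z, colorOf G D z ≠ .red →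
      (∃ b1 w1 w2 b2 : V, z ∈ ({b1, w1, w2, b2} : Finset V) ∧
        colorOf G D b1 = .blue ∧ colorOf G D w1 = .white ∧
        colorOf G D w2 = .white ∧ colorOf G D b2 = .blue ∧ b1 ≠ b2 ∧
        (residualGraph G D).neighborFinset b1 = {w1} ∧
        (residualGraph G D).neighborFinset w1 = {b1, w2} ∧
        (residualGraph G D).neighborFinset w2 = {w1, b2} ∧
        (residualGraph G D).neighborFinset b2 = {w2}) ∨
      (∃ b1 g b2 : V, z ∈ ({b1, g, b2} : Finset V) ∧
        colorOf G D b1 = .blue ∧ colorOf G D g = .green ∧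
        colorOf G D b2 = .blue ∧ b1 ≠ b2 ∧
        (residualGraph G D).neighborFinset b1 = {g} ∧
        (residualGraph G D).neighborFinset g = {b1, b2} ∧
        (residualGraph G D).neighborFinset b2 = {g})) := by
  have h : IsPhase2 G D := hphase2
  refine ⟨fun v hv => ?_, fun z hz => ?_⟩
  · have hvdom : v ∉ totDom G D :=
      hv.elim (fun hv => (colorOf_eq_white.1 hv).1) fun hv => (colorOf_eq_green.1 hv).1
    rw [← card_neighborFinset_eq_degree, neighborFinset_residualGraph_of_notMem_totDom hvdom,
      card_neighborFinset_eq_degree]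
    exact ne_of_gt (hmin v)
  · obtain ⟨u, hu, hzu⟩ := exists_notMem_totDom_mem_insert_neighborFinset hz
    exact h.mem_component_of_notMem_totDom hmin hu hzu
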